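/- arXiv:2310.01213 — 2 statements merged into one kernel-verified Lean document; each statement's English description precedes it below -/
import Mathlib

section
/- For q = 2, the number of q-decreasing binary words of length n satisfies the tribonacci recurrence: |W_{2,n}| = |W_{2,n-1}| + |W_{2,n-2}| + |W_{2,n-3}| for n ≥ 3, with |W_{2,0}|=1, |W_{2,1}|=2, |W_{2,2}|=4. -/
/-- A binary word (`true` = 1, `false` = 0) is `q`-decreasing if every
length-maximal occurrence of a factor `0^a 1^b` with `a > 0` satisfies
`q·a > b`. -/
def QDecreasing (q : ℝ) (w : List Bool) : Prop :=
  ∀ u v : List Bool, ∀ a b : ℕ, 0 < a →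
    w = u ++ (List.replicate a false ++ List.replicate b true) ++ v →
    u.getLast? ≠ some false → v.head? ≠ some true →
    q * a > b

/-- The number of `2`-decreasing binary words of length `n`. -/
noncomputable def W2 (n : ℕ) : ℕ :=
  Nat.card {w : List Bool // w.length = n ∧ QDecreasing 2 w}

/-!
A word starting with `0` splits as `0^a 1^b v` after its first maximal factor `0^a 1^b`, and
since a factor `0^p 1^r` never crosses a `1`–`0` boundary, the word is `2`-decreasing iff
`b < 2a` and `v` is. Let `T n = Nat.card (LeadingBlock.OfLength n)` count such words of
length `n`. Looking at the first letter, `W2 (n + 1) = W2 n + T (n + 1)`. Adjusting the first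
block gives
`T (n + 3) = T (n + 2) + T (n + 1) + T n`: add a leading `0` (these are the blocks with
`b + 3 ≤ 2a`), prepend `01` (the blocks with `a = 1`), or insert a `0` and two `1`s (the rest).
By induction `T (n + 2) + T n = 2 * W2 n`, and the three identities combine to the tribonacci
recurrence. Words of length at most `2` are all `2`-decreasing, which gives the initial values.
-/

open List

theorem List.replicate_append_inj {α : Type*} {c : α} {m n : ℕ} {l₁ l₂ : List α}
    (h : replicate m c ++ l₁ = replicate n c ++ l₂) (h₁ : l₁.head? ≠ some c)
    (h₂ : l₂.head? ≠ some c) : m = n ∧ l₁ = l₂ := by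
  wlog hmn : m ≤ n generalizing m n l₁ l₂
  · obtain ⟨rfl, rfl⟩ := this h.symm h₂ h₁ (by omega)
    exact ⟨rfl, rfl⟩
  obtain ⟨k, rfl⟩ := Nat.exists_eq_add_of_le hmn
  rw [replicate_add, append_assoc, append_cancel_left_eq] at h
  subst h
  cases k with
  | zero => simp
  | succ k => simp [replicate_succ] at h₁

theorem List.exists_eq_replicate_append {α : Type*} (c : α) :
    ∀ l : List α, ∃ k l', l = replicate k c ++ l' ∧ l'.head? ≠ some c
  | [] => ⟨0, [], by simp⟩
  | x :: l => by
    by_cases hx : x = c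
    · obtain ⟨k, l', rfl, hl'⟩ := exists_eq_replicate_append c l
      exact ⟨k + 1, l', by simp [hx, replicate_succ], hl'⟩
    · exact ⟨0, x :: l, by simp, by simpa⟩

theorem false_notMem_of_append_eq_replicate {p r : ℕ} {l₁ l₂ : List Bool}
    (h : l₁ ++ l₂ = replicate p false ++ replicate r true) (h₁ : true ∈ l₁) : false ∉ l₂ := by
  have hs : (l₁ ++ l₂).Pairwise (· ≤ ·) := by
    rw [h, pairwise_append]
    simp
  exact fun h₂ ↦ absurd ((pairwise_append.1 hs).2.2 _ h₁ _ h₂) (by decide)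

theorem head?_eq_some_false_of_ne_nil {l : List Bool} (hl : l ≠ []) (h : l.head? ≠ some true) :
    l.head? = some false := by
  rcases l with _ | ⟨_ | _, l⟩ <;> simp_all

section QDecreasing

variable {q : ℝ} {z w : List Bool}

theorem qDecreasing_nil : QDecreasing q [] := by
  intro u v a b ha h _ _
  have := congrArg length h
  simp at this
  omega

theorem QDecreasing.of_append_right (hz : z.getLast? ≠ some false)
    (h : QDecreasing q (z ++ w)) : QDecreasing q w := by
  intro u v a b ha hw hu hv
  refine h (z ++ u) v a b ha (by simp [hw]) ?_ hv
  rcases u.eq_nil_or_concat with rfl | ⟨u, x, rfl⟩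
  · simpa using hz
  · simpa using hu

theorem QDecreasing.of_append_left (hw : w.head? ≠ some true)
    (h : QDecreasing q (z ++ w)) : QDecreasing q z := by
  intro u v a b ha hz hu hv
  refine h u (v ++ w) a b ha (by simp [hz]) hu ?_
  cases v with
  | nil => simpa using hw
  | cons x v => simpa using hv

theorem QDecreasing.append (hz : z.getLast? ≠ some false) (hw : w.head? ≠ some true)
    (h₁ : QDecreasing q z) (h₂ : QDecreasing q w) : QDecreasing q (z ++ w) := by
  intro u v a b ha h hu hv
  rw [append_assoc] at h
  rcases append_eq_append_iff.1 h with ⟨x, rfl, rfl⟩ | ⟨x, rfl, hx⟩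
  · refine h₂ x v a b ha (append_assoc ..).symm (fun hx ↦ hu ?_) hv
    simp [getLast?_append, hx]
  rcases append_eq_append_iff.1 hx with ⟨y, rfl, rfl⟩ | ⟨y, hxy, rfl⟩
  · refine h₁ u y a b ha (by simp) hu (fun hy ↦ hv ?_)
    simp [head?_append, hy]
  -- the factor `0^a 1^b` would straddle `z ++ w` at a `1`–`0` boundary
  rcases x.eq_nil_or_concat with rfl | ⟨x, _ | _, rfl⟩
  · exact h₂ [] v a b ha (by simp [hxy]) (by simp) hv
  · simp at hz
  rcases y with _ | ⟨_ | _, y⟩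
  · exact h₁ u [] a b ha (by simp [hxy]) hu (by simp)
  · exact (false_notMem_of_append_eq_replicate hxy.symm (by simp) (by simp)).elim
  · simp at hw

theorem qDecreasing_cons_true_iff : QDecreasing q (true :: w) ↔ QDecreasing q w := by
  refine ⟨QDecreasing.of_append_right (z := [true]) (by simp), fun h u v a b ha hw hu hv ↦ ?_⟩
  cases u with
  | nil => cases a <;> simp_all [replicate_succ]
  | cons x u =>
    simp only [cons_append, cons.injEq] at hw
    refine h u v a b ha hw.2 (fun hu' ↦ hu ?_) hv
    cases u <;> simp_all

theorem qDecreasing_replicate_append_replicate_iff {a b : ℕ} (ha : 0 < a) :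
    QDecreasing q (replicate a false ++ replicate b true) ↔ (b : ℝ) < q * a := by
  refine ⟨fun h ↦ h [] [] a b ha (by simp) (by simp) (by simp), fun hb u v p r hp h hu hv ↦ ?_⟩
  have hu : u = [] := by
    rcases u.eq_nil_or_concat with rfl | ⟨u, _ | _, rfl⟩
    · rfl
    · simp at hu
    · refine (false_notMem_of_append_eq_replicate (p := a) (r := b) (l₁ := u ++ [true])
        (l₂ := replicate p false ++ replicate r true ++ v) (by simp [h]) (by simp)
        (by simp [hp.ne'])).elim
  subst hu
  rcases Nat.eq_zero_or_pos r with rfl | hr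
  · have hq : 0 < q := pos_of_mul_pos_left ((Nat.cast_nonneg b).trans_lt hb) (Nat.cast_nonneg a)
    simp only [CharP.cast_eq_zero, gt_iff_lt]
    positivity
  · obtain ⟨rfl, hbr⟩ := replicate_append_inj (l₁ := replicate b true ++ [])
      (l₂ := replicate r true ++ v) (by simpa using h) (by cases b <;> simp [replicate_succ])
      (by cases r <;> simp_all [replicate_succ])
    obtain ⟨rfl, -⟩ := replicate_append_inj hbr (by simp) hv
    exact hb

theorem qDecreasing_replicate_append_replicate_append_iff {a b : ℕ} {v : List Bool} (ha : 0 < a)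
    (hv : v.head? ≠ some true) (hb : b = 0 → v = []) :
    QDecreasing q (replicate a false ++ replicate b true ++ v) ↔
      (b : ℝ) < q * a ∧ QDecreasing q v := by
  rcases Nat.eq_zero_or_pos b with rfl | hb
  · simpa [hb rfl, qDecreasing_nil] using
      qDecreasing_replicate_append_replicate_iff (q := q) (b := 0) ha
  have hz : (replicate a false ++ replicate b true).getLast? ≠ some false := by
    obtain ⟨b, rfl⟩ := Nat.exists_eq_add_of_lt hb
    simp [replicate_succ']
  rw [← qDecreasing_replicate_append_replicate_iff ha]
  exact ⟨fun h ↦ ⟨h.of_append_left hv, h.of_append_right hz⟩, fun h ↦ h.1.append hz hv h.2⟩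

end QDecreasing

/-- `⟨a, b, v⟩` encodes the word `0^a 1^b v`; `Valid` makes `0^a 1^b` its first maximal factor
and the word `2`-decreasing. -/
@[ext] structure LeadingBlock where
  zeros : ℕ
  ones : ℕ
  rest : List Bool

namespace LeadingBlock

def toWord (t : LeadingBlock) : List Bool :=
  replicate t.zeros false ++ replicate t.ones true ++ t.rest

structure Valid (t : LeadingBlock) : Prop where
  zeros_pos : 0 < t.zeros
  ones_lt : t.ones < 2 * t.zeros
  head?_rest : t.rest.head? ≠ some true
  rest_eq_nil : t.ones = 0 → t.rest = []
  qDecreasing_rest : QDecreasing 2 t.rest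

@[simp] theorem length_toWord (t : LeadingBlock) :
    t.toWord.length = t.zeros + t.ones + t.rest.length := by
  simp [toWord, Nat.add_assoc]

theorem head?_toWord {t : LeadingBlock} (h : 0 < t.zeros) : t.toWord.head? = some false := by
  obtain ⟨a, ha⟩ := Nat.exists_eq_add_of_lt h
  simp [toWord, ha, replicate_succ]

theorem toWord_ne_nil {t : LeadingBlock} (h : 0 < t.zeros) : t.toWord ≠ [] :=
  fun h' ↦ by simpa [h'] using head?_toWord h

theorem toWord_injective {s t : LeadingBlock} (hs : s.Valid) (ht : t.Valid)
    (h : s.toWord = t.toWord) : s = t := by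
  have head?_ne {t : LeadingBlock} (ht : t.Valid) :
      (replicate t.ones true ++ t.rest).head? ≠ some false := by
    rcases Nat.eq_zero_or_pos t.ones with h0 | h0
    · simp [h0, ht.rest_eq_nil h0]
    · obtain ⟨b, hb⟩ := Nat.exists_eq_add_of_lt h0
      simp [hb, replicate_succ]
  simp only [toWord, append_assoc] at h
  obtain ⟨hzeros, h⟩ := replicate_append_inj h (head?_ne hs) (head?_ne ht)
  obtain ⟨hones, hrest⟩ := replicate_append_inj h hs.head?_rest ht.head?_rest
  exact LeadingBlock.ext hzeros hones hrest

theorem qDecreasing_toWord_iff {t : LeadingBlock} (h₀ : 0 < t.zeros)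
    (h₁ : t.rest.head? ≠ some true) (h₂ : t.ones = 0 → t.rest = []) :
    QDecreasing 2 t.toWord ↔ t.ones < 2 * t.zeros ∧ QDecreasing 2 t.rest := by
  rw [toWord, qDecreasing_replicate_append_replicate_append_iff h₀ h₁ h₂]
  norm_cast

theorem Valid.qDecreasing_toWord {t : LeadingBlock} (ht : t.Valid) : QDecreasing 2 t.toWord :=
  (qDecreasing_toWord_iff ht.zeros_pos ht.head?_rest ht.rest_eq_nil).2
    ⟨ht.ones_lt, ht.qDecreasing_rest⟩

theorem exists_valid_toWord_eq {w : List Bool} (hw : w.head? = some false)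
    (h : QDecreasing 2 w) : ∃ t : LeadingBlock, t.Valid ∧ t.toWord = w := by
  obtain ⟨a, u, rfl, hu⟩ := exists_eq_replicate_append false w
  obtain ⟨b, v, rfl, hv⟩ := exists_eq_replicate_append true u
  have ha : 0 < a := by
    rcases Nat.eq_zero_or_pos a with rfl | ha
    · simp_all
    · exact ha
  have hb : b = 0 → v = [] := by
    rintro rfl
    rcases v with _ | ⟨_ | _, v⟩ <;> simp_all
  let t : LeadingBlock := ⟨a, b, v⟩
  have hw' : t.toWord = replicate a false ++ (replicate b true ++ v) := by simp [t, toWord]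
  obtain ⟨hab, hv'⟩ := (qDecreasing_toWord_iff (t := t) ha hv hb).1 (hw' ▸ h)
  exact ⟨t, ⟨ha, hab, hv, hb, hv'⟩, hw'⟩

abbrev OfLength (n : ℕ) := {t : LeadingBlock // t.Valid ∧ t.toWord.length = n}

instance (n : ℕ) : Finite (OfLength n) :=
  Finite.of_injective (β := List.Vector Bool n) (fun t ↦ ⟨t.1.toWord, t.2.2⟩)
    fun s t h ↦ Subtype.ext (toWord_injective s.2.1 t.2.1 (congrArg Subtype.val h))

def consZero (t : LeadingBlock) : LeadingBlock := ⟨t.zeros + 1, t.ones, t.rest⟩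

def dropZero (t : LeadingBlock) : LeadingBlock := ⟨t.zeros - 1, t.ones, t.rest⟩

def prependZeroOne (t : LeadingBlock) : LeadingBlock := ⟨1, 1, t.toWord⟩

/-- Inserts one `0` and two `1`s. The second branch produces the blocks `0011 v` with
`v ≠ []`, which the first cannot reach: the image is exactly the valid blocks with
`2 ≤ zeros` and `2 * zeros ≤ ones + 2`. -/
def addZeroOneOne (t : LeadingBlock) : LeadingBlock :=
  if 2 * t.zeros ≤ t.ones + 2 then ⟨t.zeros + 1, t.ones + 2, t.rest⟩
  else ⟨2, 2, t.dropZero.toWord⟩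

theorem Valid.consZero {t : LeadingBlock} (ht : t.Valid) : t.consZero.Valid :=
  ⟨Nat.succ_pos _, show t.ones < 2 * (t.zeros + 1) by have := ht.ones_lt; omega, ht.head?_rest,
    ht.rest_eq_nil, ht.qDecreasing_rest⟩

theorem Valid.dropZero {t : LeadingBlock} (ht : t.Valid) (h : t.ones + 3 ≤ 2 * t.zeros) :
    t.dropZero.Valid :=
  ⟨show 0 < t.zeros - 1 by omega, show t.ones < 2 * (t.zeros - 1) by omega, ht.head?_rest,
    ht.rest_eq_nil, ht.qDecreasing_rest⟩

@[simp] theorem dropZero_consZero (t : LeadingBlock) : t.consZero.dropZero = t := rfl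

theorem consZero_dropZero {t : LeadingBlock} (h : 0 < t.zeros) : t.dropZero.consZero = t := by
  ext <;> simp [consZero, dropZero]
  omega

theorem Valid.prependZeroOne {t : LeadingBlock} (ht : t.Valid) : t.prependZeroOne.Valid :=
  ⟨Nat.one_pos, show 1 < 2 * 1 by norm_num, by simp [LeadingBlock.prependZeroOne,
    head?_toWord ht.zeros_pos], by simp [LeadingBlock.prependZeroOne], ht.qDecreasing_toWord⟩

theorem Valid.addZeroOneOne {t : LeadingBlock} (ht : t.Valid) : t.addZeroOneOne.Valid := by
  have := ht.ones_lt
  unfold LeadingBlock.addZeroOneOne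
  split_ifs with h
  · exact ⟨Nat.succ_pos _, show t.ones + 2 < 2 * (t.zeros + 1) by omega, ht.head?_rest,
      by simp, ht.qDecreasing_rest⟩
  · have hs := ht.dropZero (by omega)
    exact ⟨two_pos, show 2 < 2 * 2 by norm_num, by simp [head?_toWord hs.zeros_pos], by simp,
      hs.qDecreasing_toWord⟩

theorem length_toWord_addZeroOneOne {t : LeadingBlock} (ht : t.Valid) :
    t.addZeroOneOne.toWord.length = t.toWord.length + 3 := by
  have := ht.ones_lt
  unfold addZeroOneOne
  split_ifs <;> simp [dropZero] <;> omega

theorem Valid.addZeroOneOne_bounds {t : LeadingBlock} (ht : t.Valid) :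
    2 ≤ t.addZeroOneOne.zeros ∧ 2 * t.addZeroOneOne.zeros ≤ t.addZeroOneOne.ones + 2 := by
  have := ht.zeros_pos
  unfold LeadingBlock.addZeroOneOne
  split_ifs
  · simp
    omega
  · simp

theorem addZeroOneOne_injective {s t : LeadingBlock} (hs : s.Valid) (ht : t.Valid)
    (h : s.addZeroOneOne = t.addZeroOneOne) : s = t := by
  have := hs.ones_lt
  have := ht.ones_lt
  unfold addZeroOneOne at h
  split_ifs at h with hs' ht' ht'
  · simp only [mk.injEq, Nat.add_right_cancel_iff] at h
    exact LeadingBlock.ext h.1 h.2.1 h.2.2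
  · simp only [mk.injEq] at h
    exact absurd (hs.rest_eq_nil (by omega)) (h.2.2 ▸ toWord_ne_nil (by simp [dropZero]; omega))
  · simp only [mk.injEq] at h
    exact absurd (ht.rest_eq_nil (by omega)) (h.2.2 ▸ toWord_ne_nil (by simp [dropZero]; omega))
  · simp only [mk.injEq, true_and] at h
    have := toWord_injective (hs.dropZero (by omega)) (ht.dropZero (by omega)) h
    rw [← consZero_dropZero hs.zeros_pos, ← consZero_dropZero ht.zeros_pos, this]

def extend (n : ℕ) : OfLength (n + 2) ⊕ OfLength (n + 1) ⊕ OfLength n → OfLength (n + 3) :=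
  Sum.elim
    (fun t ↦ ⟨t.1.consZero, t.2.1.consZero, by have := t.2.2; simp [consZero] at this ⊢; omega⟩)
    (Sum.elim
      (fun t ↦ ⟨t.1.prependZeroOne, t.2.1.prependZeroOne,
        by have := t.2.2; simp [prependZeroOne] at this ⊢; omega⟩)
      (fun t ↦ ⟨t.1.addZeroOneOne, t.2.1.addZeroOneOne,
        by rw [length_toWord_addZeroOneOne t.2.1, t.2.2]⟩))

theorem extend_injective (n : ℕ) : Function.Injective (extend n) := by
  refine .sumElim (fun s t h ↦ ?_) (.sumElim (fun s t h ↦ ?_) (fun s t h ↦ ?_) fun s t h ↦ ?_)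
    fun s t h ↦ ?_
  · exact Subtype.ext (by simpa using congrArg (·.1.dropZero) h)
  · exact Subtype.ext (toWord_injective s.2.1 t.2.1 (congrArg (·.1.rest) h))
  · exact Subtype.ext (addZeroOneOne_injective s.2.1 t.2.1 (congrArg Subtype.val h))
  · have := t.2.1.addZeroOneOne_bounds
    have := congrArg (·.1.zeros) h
    simp [prependZeroOne] at this
    omega
  · have := s.2.1.ones_lt
    have hz := congrArg (·.1.zeros) h
    have ho := congrArg (·.1.ones) h
    rcases t with t | t
    · simp [consZero, prependZeroOne] at hz
      exact s.2.1.zeros_pos.ne' hz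
    · have := t.2.1.addZeroOneOne_bounds
      simp [consZero] at hz ho
      omega

theorem extend_surjective (n : ℕ) : Function.Surjective (extend n) := by
  rintro ⟨t, ht, hn⟩
  have := ht.zeros_pos
  have := ht.ones_lt
  simp only [length_toWord] at hn
  by_cases h₁ : t.ones + 3 ≤ 2 * t.zeros
  · refine ⟨.inl ⟨t.dropZero, ht.dropZero h₁, by simp [dropZero]; omega⟩, ?_⟩
    exact Subtype.ext (consZero_dropZero ht.zeros_pos)
  have hrest : t.rest ≠ [] → ∃ s : LeadingBlock, s.Valid ∧ s.toWord = t.rest := fun hne ↦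
    exists_valid_toWord_eq (head?_eq_some_false_of_ne_nil hne ht.head?_rest) ht.qDecreasing_rest
  by_cases h₂ : t.zeros = 1
  · have hones : t.ones = 1 := by
      by_contra hb
      have := ht.rest_eq_nil (by omega)
      simp [this] at hn
      omega
    obtain ⟨s, hs, hst⟩ := hrest (by rintro h; simp [h] at hn; omega)
    refine ⟨.inr (.inl ⟨s, hs, by rw [hst]; omega⟩), Subtype.ext ?_⟩
    exact LeadingBlock.ext h₂.symm hones.symm hst
  by_cases h₃ : t.ones = 2 ∧ t.rest ≠ []
  · obtain ⟨s, hs, hst⟩ := hrest h₃.2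
    have hlen := congrArg length hst
    simp only [length_toWord] at hlen
    refine ⟨.inr (.inr ⟨s.consZero, hs.consZero, by simp [consZero]; omega⟩), Subtype.ext ?_⟩
    have hc : ¬2 * s.consZero.zeros ≤ s.consZero.ones + 2 := by
      have := hs.ones_lt
      simp [consZero]
      omega
    simp only [extend, Sum.elim_inr, addZeroOneOne, if_neg hc, dropZero_consZero]
    exact LeadingBlock.ext (show 2 = t.zeros by omega) h₃.1.symm hst
  · let s : LeadingBlock := ⟨t.zeros - 1, t.ones - 2, t.rest⟩
    have hs : s.Valid :=
      ⟨show 0 < t.zeros - 1 by omega, show t.ones - 2 < 2 * (t.zeros - 1) by omega,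
        ht.head?_rest, show t.ones - 2 = 0 → t.rest = [] from
          fun h ↦ not_not.1 fun hne ↦ h₃ ⟨by omega, hne⟩, ht.qDecreasing_rest⟩
    refine ⟨.inr (.inr ⟨s, hs, by simp [s]; omega⟩), Subtype.ext ?_⟩
    have hc : 2 * (t.zeros - 1) ≤ t.ones - 2 + 2 := by omega
    simp only [extend, Sum.elim_inr, addZeroOneOne, s, if_pos hc]
    ext <;> simp <;> omega

end LeadingBlock

theorem qDecreasing_of_length_lt {q : ℝ} {w : List Bool} (hq : 1 ≤ q)
    (hw : (w.length : ℝ) < q + 1) : QDecreasing q w := by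
  intro u v a b ha h _ _
  have hlen : ((a + b : ℕ) : ℝ) ≤ w.length := by
    rw [h]
    exact_mod_cast (by simp; omega)
  have ha : (1 : ℝ) ≤ a := by exact_mod_cast ha
  push_cast at hlen
  nlinarith

instance (n : ℕ) : Finite {w : List Bool // w.length = n ∧ QDecreasing 2 w} :=
  Finite.of_injective (β := List.Vector Bool n) (fun w ↦ ⟨w.1, w.2.1⟩)
    fun _ _ h ↦ Subtype.ext (Subtype.mk.inj h)

theorem W2_eq_two_pow {n : ℕ} (hn : n ≤ 2) : W2 n = 2 ^ n := by
  have e : {w : List Bool // w.length = n ∧ QDecreasing 2 w} ≃ List.Vector Bool n :=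
    Equiv.subtypeEquivRight fun w ↦ and_iff_left_of_imp fun h ↦
      qDecreasing_of_length_lt one_le_two (by rw [h]; norm_cast; omega)
  rw [W2, Nat.card_congr e, Nat.card_eq_fintype_card, card_vector, Fintype.card_bool]

open LeadingBlock

theorem card_ofLength_zero : Nat.card (OfLength 0) = 0 := by
  have : IsEmpty (OfLength 0) := ⟨fun ⟨t, ht, hn⟩ ↦ by
    simp only [length_toWord] at hn
    exact ht.zeros_pos.ne' (by omega)⟩
  exact Nat.card_of_isEmpty

theorem card_ofLength_add_three (n : ℕ) :
    Nat.card (OfLength (n + 3)) =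
      Nat.card (OfLength (n + 2)) + Nat.card (OfLength (n + 1)) + Nat.card (OfLength n) := by
  rw [← Nat.card_eq_of_bijective _ ⟨extend_injective n, extend_surjective n⟩, Nat.card_sum,
    Nat.card_sum, add_assoc]

def consTrueOrToWord (n : ℕ) :
    {w : List Bool // w.length = n ∧ QDecreasing 2 w} ⊕ OfLength (n + 1) →
      {w : List Bool // w.length = n + 1 ∧ QDecreasing 2 w} :=
  Sum.elim (fun w ↦ ⟨true :: w.1, by simp [w.2.1], qDecreasing_cons_true_iff.2 w.2.2⟩)
    fun t ↦ ⟨t.1.toWord, t.2.2, t.2.1.qDecreasing_toWord⟩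

theorem consTrueOrToWord_bijective (n : ℕ) : Function.Bijective (consTrueOrToWord n) := by
  refine ⟨.sumElim (fun v w h ↦ ?_) (fun s t h ↦ ?_) fun w t h ↦ ?_, ?_⟩
  · exact Subtype.ext (cons_injective (congrArg Subtype.val h))
  · exact Subtype.ext (toWord_injective s.2.1 t.2.1 (congrArg Subtype.val h))
  · simpa [consTrueOrToWord, head?_toWord t.2.1.zeros_pos] using congrArg (·.1.head?) h
  · rintro ⟨_ | ⟨_ | _, w⟩, hn, hw⟩
    · simp at hn
    · obtain ⟨t, ht, htw⟩ := exists_valid_toWord_eq rfl hw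
      exact ⟨.inr ⟨t, ht, htw ▸ hn⟩, Subtype.ext htw⟩
    · exact ⟨.inl ⟨w, by simpa using hn, qDecreasing_cons_true_iff.1 hw⟩, rfl⟩

theorem W2_succ (n : ℕ) : W2 (n + 1) = W2 n + Nat.card (OfLength (n + 1)) :=
  (Nat.card_eq_of_bijective _ (consTrueOrToWord_bijective n)).symm.trans Nat.card_sum

theorem card_ofLength_add_two_add (n : ℕ) :
    Nat.card (OfLength (n + 2)) + Nat.card (OfLength n) = 2 * W2 n := by
  induction n with
  | zero =>
    show Nat.card (OfLength 2) + Nat.card (OfLength 0) = 2 * W2 0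
    have h₁ : W2 1 = W2 0 + Nat.card (OfLength 1) := W2_succ 0
    have h₂ : W2 2 = W2 1 + Nat.card (OfLength 2) := W2_succ 1
    rw [W2_eq_two_pow (by norm_num), W2_eq_two_pow (by norm_num)] at h₁ h₂
    rw [card_ofLength_zero, W2_eq_two_pow (by norm_num)]
    omega
  | succ n ih =>
    show Nat.card (OfLength (n + 3)) + Nat.card (OfLength (n + 1)) = 2 * W2 (n + 1)
    have := card_ofLength_add_three n
    have := W2_succ n
    omega

theorem W2_add_three (n : ℕ) : W2 (n + 3) = W2 (n + 2) + W2 (n + 1) + W2 n := by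
  have : W2 (n + 3) = W2 (n + 2) + Nat.card (OfLength (n + 3)) := W2_succ (n + 2)
  have := W2_succ n
  have := card_ofLength_add_three n
  have := card_ofLength_add_two_add n
  omega

/-- The number of `2`-decreasing words of length `n` satisfies the tribonacci
recurrence `|W_{2,n}| = |W_{2,n-1}| + |W_{2,n-2}| + |W_{2,n-3}|` for `n ≥ 3`,
with initial values `1, 2, 4`. -/
theorem stmt_8 :
    W2 0 = 1 ∧ W2 1 = 2 ∧ W2 2 = 4 ∧
      ∀ n : ℕ, 3 ≤ n → W2 n = W2 (n - 1) + W2 (n - 2) + W2 (n - 3) := by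
  refine ⟨W2_eq_two_pow (by norm_num), W2_eq_two_pow (by norm_num), W2_eq_two_pow (by norm_num),
    fun n hn ↦ ?_⟩
  obtain ⟨n, rfl⟩ := Nat.exists_eq_add_of_le' hn
  exact W2_add_three n
end

section
/- Let Φ(q) = 1/ρ_q where ρ_q ∈ (0,1) solves Σ_{i=0}^∞ x^{1+i+⌊i/q⌋} = 1. Then Φ is left-continuous at every positive rational q and continuous at every positive irrational q; moreover at every positive rational q = c/d (irreducible), lim_{δ→0⁺} Φ(q+δ) > Φ(q), i.e., Φ has a jump discontinuity from the right at every positive rational. -/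
/-!
Increasing `q` can only lower the exponents `1 + i + ⌊i/q⌋₊`, so `ρ` is antitone and has
one-sided limits. As `t → q`, every single exponent is eventually constant: from the left it
equals its value at `q`, from the right it equals `1 + i + (⌈i/q⌉₊ - 1)`. Dominated convergence
passes the defining equation to the limit, so each one-sided limit of `ρ` is the root of the
limiting series. From the left this is the series at `q` itself, whence left continuity. From
the right the exponents drop exactly at those `i` for which `i/q` is a positive integer; there
is such an `i` iff `q` is rational, and then the limiting series is strictly larger at `ρ q`,
which pushes its root strictly below `ρ q`.
-/

open Filter Set Topology

section OneSided

variable {R : Type*} [Field R] [LinearOrder R] [IsStrictOrderedRing R]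
  [TopologicalSpace R] [OrderTopology R]

lemma tendsto_div_nhdsLT {a q : R} (ha : 0 ≤ a) (hq : 0 < q) :
    Tendsto (fun t => a / t) (𝓝[<] q) (𝓝[≥] (a / q)) := by
  refine tendsto_nhdsWithin_iff.2 ⟨?_, ?_⟩
  · exact ((continuousAt_const.div continuousAt_id hq.ne').tendsto).mono_left nhdsWithin_le_nhds
  · filter_upwards [Ioo_mem_nhdsLT hq] with t ht
    exact div_le_div_of_nonneg_left ha ht.1 ht.2.le

lemma tendsto_div_nhdsGT {a q : R} (ha : 0 < a) (hq : 0 < q) :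
    Tendsto (fun t => a / t) (𝓝[>] q) (𝓝[<] (a / q)) := by
  refine tendsto_nhdsWithin_iff.2 ⟨?_, ?_⟩
  · exact ((continuousAt_const.div continuousAt_id hq.ne').tendsto).mono_left nhdsWithin_le_nhds
  · filter_upwards [self_mem_nhdsWithin] with t ht
    exact div_lt_div_of_pos_left ha hq ht

variable [FloorSemiring R]

lemma eventually_natFloor_eq_nhdsGE {x : R} (hx : 0 ≤ x) : ∀ᶠ y in 𝓝[≥] x, ⌊y⌋₊ = ⌊x⌋₊ := by
  filter_upwards [nhdsWithin_le_nhds (Iio_mem_nhds (Nat.lt_floor_add_one x)), self_mem_nhdsWithin]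
    with y hy hxy
  have hy0 : 0 ≤ y := hx.trans hxy
  exact le_antisymm (Nat.lt_succ_iff.1 ((Nat.floor_lt hy0).2 (by exact_mod_cast hy)))
    (Nat.floor_le_floor hxy)

lemma eventually_natFloor_eq_natCeil_sub_one_nhdsLT {x : R} (hx : 0 < x) :
    ∀ᶠ y in 𝓝[<] x, ⌊y⌋₊ = ⌈x⌉₊ - 1 := by
  have hceil : 1 ≤ ⌈x⌉₊ := Nat.one_le_ceil_iff.2 hx
  have hlt : ((⌈x⌉₊ - 1 : ℕ) : R) < x := by
    rw [Nat.cast_sub hceil, Nat.cast_one, sub_lt_iff_lt_add]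
    exact Nat.ceil_lt_add_one hx.le
  filter_upwards [Ioo_mem_nhdsLT hlt] with y hy
  rw [Nat.floor_eq_iff ((Nat.cast_nonneg _).trans hy.1.le), Nat.cast_sub hceil, Nat.cast_one,
    sub_add_cancel]
  exact ⟨by exact_mod_cast hy.1.le, hy.2.trans_le (Nat.le_ceil x)⟩

end OneSided

noncomputable def tsumPow (n : ℕ → ℕ) (x : ℝ) : ℝ := ∑' i, x ^ n i

section TsumPow

variable {n m : ℕ → ℕ} {x : ℝ}

lemma summable_pow_of_le (hn : ∀ i, i ≤ n i) (hx0 : 0 ≤ x) (hx1 : x < 1) :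
    Summable fun i => x ^ n i :=
  (summable_geometric_of_lt_one hx0 hx1).of_nonneg_of_le (fun _ => pow_nonneg hx0 _)
    fun i => pow_le_pow_of_le_one hx0 hx1.le (hn i)

lemma strictMonoOn_tsumPow (hn : ∀ i, i ≤ n i) : StrictMonoOn (tsumPow n) (Ico 0 1) := by
  intro x hx y hy hxy
  refine Summable.tsum_lt_tsum (i := 1) (fun i => pow_le_pow_left₀ hx.1 hxy.le _)
    (pow_lt_pow_left₀ hxy hx.1 (Nat.one_le_iff_ne_zero.1 (hn 1)))
    (summable_pow_of_le hn hx.1 hx.2) (summable_pow_of_le hn hy.1 hy.2)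

lemma tsumPow_le_tsumPow (hn : ∀ i, i ≤ n i) (hnm : ∀ i, n i ≤ m i) (hx0 : 0 ≤ x) (hx1 : x < 1) :
    tsumPow m x ≤ tsumPow n x :=
  Summable.tsum_le_tsum (fun i => pow_le_pow_of_le_one hx0 hx1.le (hnm i))
    (summable_pow_of_le (fun i => (hn i).trans (hnm i)) hx0 hx1) (summable_pow_of_le hn hx0 hx1)

lemma tsumPow_lt_tsumPow (hn : ∀ i, i ≤ n i) (hnm : ∀ i, n i ≤ m i) {j : ℕ} (hj : n j < m j)
    (hx0 : 0 < x) (hx1 : x < 1) : tsumPow m x < tsumPow n x :=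
  Summable.tsum_lt_tsum (fun i => pow_le_pow_of_le_one hx0.le hx1.le (hnm i))
    (pow_lt_pow_right_of_lt_one₀ hx0 hx1 hj)
    (summable_pow_of_le (fun i => (hn i).trans (hnm i)) hx0.le hx1)
    (summable_pow_of_le hn hx0.le hx1)

lemma tendsto_tsumPow {α : Type*} {l : Filter α} {n : α → ℕ → ℕ} {x : α → ℝ} {L : ℝ}
    (hn : ∀ t i, i ≤ n t i) (hnm : ∀ i, ∀ᶠ t in l, n t i = m i) (hx : Tendsto x l (𝓝 L))
    (hx0 : ∀ᶠ t in l, 0 ≤ x t) (hL : L < 1) :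
    Tendsto (fun t => tsumPow (n t) (x t)) l (𝓝 (tsumPow m L)) := by
  obtain ⟨b, hLb, hb1⟩ := exists_between (max_lt hL one_pos)
  have hb0 : 0 ≤ b := (le_max_right L 0).trans hLb.le
  refine tendsto_tsum_of_dominated_convergence (summable_geometric_of_lt_one hb0 hb1)
    (fun i => (hx.pow (m i)).congr' ?_) ?_
  · filter_upwards [hnm i] with t ht
    rw [ht]
  · filter_upwards [hx0, (tendsto_order.1 hx).2 b ((le_max_left L 0).trans_lt hLb)]
      with t ht0 htb i
    rw [Real.norm_of_nonneg (pow_nonneg ht0 _)]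
    exact (pow_le_pow_left₀ ht0 htb.le _).trans (pow_le_pow_of_le_one hb0 hb1.le (hn t i))

end TsumPow

lemma exists_natCast_div_eq_natCast {q : ℝ} (hq : 0 < q) (hrat : ∃ a : ℚ, (a : ℝ) = q) :
    ∃ i k : ℕ, k ≠ 0 ∧ (i : ℝ) / q = k := by
  obtain ⟨a, rfl⟩ := hrat
  have hnum : 0 ≤ a.num := Rat.num_nonneg.2 (Rat.cast_pos.1 hq).le
  refine ⟨a.num.toNat, a.den, a.den_ne_zero, ?_⟩
  have h : ((a.num.toNat : ℤ) : ℚ) = a.den * a := by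
    rw [Int.toNat_of_nonneg hnum, Rat.den_mul_eq_num]
  rw [div_eq_iff hq.ne']
  exact_mod_cast h

noncomputable def exponent (q : ℝ) (i : ℕ) : ℕ := 1 + i + ⌊(i : ℝ) / q⌋₊

/-- The limit of `exponent t i` as `t → q⁺`: `⌈i/q⌉₊ - 1` is the largest natural number
strictly below `i/q`, truncated subtraction making it `0` at `i = 0`. -/
noncomputable def rightExponent (q : ℝ) (i : ℕ) : ℕ := 1 + i + (⌈(i : ℝ) / q⌉₊ - 1)

section Exponent

variable {q : ℝ}

lemma le_exponent (q : ℝ) (i : ℕ) : i ≤ exponent q i := by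
  unfold exponent; omega

lemma le_rightExponent (q : ℝ) (i : ℕ) : i ≤ rightExponent q i := by
  unfold rightExponent; omega

lemma exponent_le_exponent {t : ℝ} (ht : 0 < t) (htq : t ≤ q) (i : ℕ) :
    exponent q i ≤ exponent t i := by
  have := Nat.floor_le_floor (div_le_div_of_nonneg_left (Nat.cast_nonneg (α := ℝ) i) ht htq)
  unfold exponent; omega

lemma rightExponent_le_exponent (q : ℝ) (i : ℕ) : rightExponent q i ≤ exponent q i := by
  have := Nat.ceil_le_floor_add_one ((i : ℝ) / q)
  unfold exponent rightExponent; omega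

lemma rightExponent_lt_exponent {i k : ℕ} (hk : k ≠ 0) (h : (i : ℝ) / q = k) :
    rightExponent q i < exponent q i := by
  unfold exponent rightExponent
  rw [h, Nat.floor_natCast, Nat.ceil_natCast]
  omega

lemma rightExponent_eq_exponent (hq : 0 < q) (hirr : Irrational q) :
    rightExponent q = exponent q := by
  ext i
  rcases eq_or_ne i 0 with rfl | hi
  · simp [exponent, rightExponent]
  · have hfloor : ⌊(i : ℝ) / q⌋₊ < ⌈(i : ℝ) / q⌉₊ :=
      Nat.lt_ceil.2 ((Nat.floor_le (by positivity)).lt_of_ne ((hirr.natCast_div hi).ne_nat _).symm)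
    have := Nat.ceil_le_floor_add_one ((i : ℝ) / q)
    unfold exponent rightExponent; omega

lemma eventually_exponent_eq_nhdsLT (hq : 0 < q) (i : ℕ) :
    ∀ᶠ t in 𝓝[<] q, exponent t i = exponent q i := by
  filter_upwards [(tendsto_div_nhdsLT (Nat.cast_nonneg i) hq).eventually
    (eventually_natFloor_eq_nhdsGE (div_nonneg (Nat.cast_nonneg i) hq.le))] with t ht
  rw [exponent, ht, exponent]

lemma eventually_exponent_eq_nhdsGT (hq : 0 < q) (i : ℕ) :
    ∀ᶠ t in 𝓝[>] q, exponent t i = rightExponent q i := by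
  rcases eq_or_ne i 0 with rfl | hi
  · exact Eventually.of_forall fun t => by simp [exponent, rightExponent]
  have hi' : (0 : ℝ) < i := Nat.cast_pos.2 (Nat.pos_of_ne_zero hi)
  filter_upwards [(tendsto_div_nhdsGT hi' hq).eventually
    (eventually_natFloor_eq_natCeil_sub_one_nhdsLT (div_pos hi' hq))] with t ht
  rw [exponent, ht, rightExponent]

end Exponent

def IsRootFunction (ρ : ℝ → ℝ) : Prop :=
  ∀ q, 0 < q → ρ q ∈ Ioo 0 1 ∧ tsumPow (exponent q) (ρ q) = 1

namespace IsRootFunction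

variable {ρ : ℝ → ℝ} {q : ℝ}

lemma mem_Ico (hρ : IsRootFunction ρ) (hq : 0 < q) : ρ q ∈ Ico 0 1 :=
  Ioo_subset_Ico_self (hρ q hq).1

lemma antitoneOn (hρ : IsRootFunction ρ) : AntitoneOn ρ (Ioi 0) := by
  intro t ht q hq htq
  by_contra! hlt
  have h₁ := strictMonoOn_tsumPow (le_exponent t) (hρ.mem_Ico ht) (hρ.mem_Ico hq) hlt
  have h₂ := tsumPow_le_tsumPow (le_exponent q) (exponent_le_exponent ht htq)
    (hρ.mem_Ico hq).1 (hρ.mem_Ico hq).2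
  linarith [(hρ t ht).2, (hρ q hq).2]

lemma tsumPow_eq_one_of_tendsto (hρ : IsRootFunction ρ) {l : Filter ℝ} [l.NeBot]
    (hl : ∀ᶠ t in l, 0 < t) {L : ℝ} (hL : Tendsto ρ l (𝓝 L)) (hL1 : L < 1) {m : ℕ → ℕ}
    (hm : ∀ i, ∀ᶠ t in l, exponent t i = m i) : tsumPow m L = 1 := by
  refine tendsto_nhds_unique (tendsto_tsumPow le_exponent hm hL ?_ hL1) ?_
  · filter_upwards [hl] with t ht using (hρ t ht).1.1.le
  · exact tendsto_const_nhds.congr' (hl.mono fun t ht => (hρ t ht).2.symm)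

lemma tendsto_nhdsLT (hρ : IsRootFunction ρ) (hq : 0 < q) : Tendsto ρ (𝓝[<] q) (𝓝 (ρ q)) := by
  have hmid : q / 2 ∈ Ioo 0 q := ⟨half_pos hq, half_lt_self hq⟩
  have hanti : AntitoneOn ρ (Ioo 0 q) := hρ.antitoneOn.mono Ioo_subset_Ioi_self
  have hbound : ∀ y ∈ ρ '' Ioo 0 q, ρ q ≤ y := by
    rintro _ ⟨t, ht, rfl⟩; exact hρ.antitoneOn ht.1 hq ht.2.le
  have hbdd : BddBelow (ρ '' Ioo 0 q) := ⟨ρ q, hbound⟩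
  set L := sInf (ρ '' Ioo 0 q)
  have hL := hanti.tendsto_nhdsWithin_Ioo_left ⟨_, hmid⟩ hbdd
  have hρL : ρ q ≤ L := le_csInf ⟨_, mem_image_of_mem ρ hmid⟩ hbound
  have hL1 : L < 1 := (csInf_le hbdd (mem_image_of_mem ρ hmid)).trans_lt (hρ _ hmid.1).1.2
  have hsum := hρ.tsumPow_eq_one_of_tendsto
    (mem_of_superset (Ioo_mem_nhdsLT hq) fun _ ht => ht.1) hL hL1
    (eventually_exponent_eq_nhdsLT hq)
  rwa [(strictMonoOn_tsumPow (le_exponent q)).injOn (hρ.mem_Ico hq)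
    ⟨(hρ.mem_Ico hq).1.trans hρL, hL1⟩ ((hρ q hq).2.trans hsum.symm)]

lemma exists_tendsto_nhdsGT (hρ : IsRootFunction ρ) (hq : 0 < q) :
    ∃ L, 0 < L ∧ L ≤ ρ q ∧ Tendsto ρ (𝓝[>] q) (𝓝 L) ∧ tsumPow (rightExponent q) L = 1 := by
  have hq1 : q + 1 ∈ Ioi q := lt_add_one q
  have hbound : ∀ y ∈ ρ '' Ioi q, y ≤ ρ q := by
    rintro _ ⟨t, ht, rfl⟩; exact hρ.antitoneOn hq (hq.trans ht) ht.le
  have hL := (hρ.antitoneOn.mono (Ioi_subset_Ioi hq.le)).tendsto_nhdsGT ⟨ρ q, hbound⟩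
  have hLρ : sSup (ρ '' Ioi q) ≤ ρ q := csSup_le ⟨_, mem_image_of_mem ρ hq1⟩ hbound
  refine ⟨_, (hρ _ (hq.trans hq1)).1.1.trans_le (le_csSup ⟨ρ q, hbound⟩ (mem_image_of_mem ρ hq1)),
    hLρ, hL, hρ.tsumPow_eq_one_of_tendsto ?_ hL (hLρ.trans_lt (hρ q hq).1.2)
      (eventually_exponent_eq_nhdsGT hq)⟩
  filter_upwards [self_mem_nhdsWithin] with t ht using hq.trans ht

lemma exists_tendsto_nhdsGT_lt (hρ : IsRootFunction ρ) (hq : 0 < q)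
    (hrat : ∃ a : ℚ, (a : ℝ) = q) : ∃ L, 0 < L ∧ Tendsto ρ (𝓝[>] q) (𝓝 L) ∧ L < ρ q := by
  obtain ⟨L, hL0, hLρ, hL, hsum⟩ := hρ.exists_tendsto_nhdsGT hq
  obtain ⟨i, k, hk, hik⟩ := exists_natCast_div_eq_natCast hq hrat
  refine ⟨L, hL0, hL, (strictMonoOn_tsumPow (le_rightExponent q)).lt_iff_lt
    ⟨hL0.le, hLρ.trans_lt (hρ q hq).1.2⟩ (hρ.mem_Ico hq) |>.1 ?_⟩
  rw [hsum, ← (hρ q hq).2]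
  exact tsumPow_lt_tsumPow (le_rightExponent q) (rightExponent_le_exponent q)
    (rightExponent_lt_exponent hk hik) (hρ q hq).1.1 (hρ q hq).1.2

lemma continuousAt_of_irrational (hρ : IsRootFunction ρ) (hq : 0 < q) (hirr : Irrational q) :
    ContinuousAt ρ q := by
  obtain ⟨L, hL0, hLρ, hL, hsum⟩ := hρ.exists_tendsto_nhdsGT hq
  rw [rightExponent_eq_exponent hq hirr] at hsum
  have hLeq : L = ρ q := (strictMonoOn_tsumPow (le_exponent q)).injOn
    ⟨hL0.le, hLρ.trans_lt (hρ q hq).1.2⟩ (hρ.mem_Ico hq) (hsum.trans (hρ q hq).2.symm)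
  exact continuousAt_iff_continuous_left'_right'.2 ⟨hρ.tendsto_nhdsLT hq, by rwa [hLeq] at hL⟩

end IsRootFunction

/-- For `q > 0` let `ρ q ∈ (0,1)` be the unique solution of
`∑_{i=0}^∞ x^(1+i+⌊i/q⌋) = 1` and set `Φ(q) = 1/ρ q`. Then `Φ` is
left-continuous at every positive rational point and continuous at every
positive irrational point; moreover at every positive rational `q` the right
limit `lim_{δ→0⁺} Φ(q+δ)` exists and is strictly greater than `Φ(q)`, i.e.
`Φ` has a jump discontinuity from the right at every positive rational. -/
theorem stmt_18 (ρ : ℝ → ℝ)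
    (hρ : ∀ q : ℝ, 0 < q → ρ q ∈ Set.Ioo (0:ℝ) 1 ∧
      (∑' i : ℕ, ρ q ^ (1 + i + ⌊(i : ℝ) / q⌋₊)) = 1) :
    (∀ q : ℝ, 0 < q → (∃ a : ℚ, (a : ℝ) = q) →
      Tendsto (fun t => 1 / ρ t) (nhdsWithin q (Set.Ioo 0 q))
        (nhds (1 / ρ q)) ∧
      ∃ L : ℝ, Tendsto (fun t => 1 / ρ t) (nhdsWithin q (Set.Ioi q))
          (nhds L) ∧ 1 / ρ q < L) ∧
    (∀ q : ℝ, 0 < q → Irrational q →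
      ContinuousWithinAt (fun t => 1 / ρ t) (Set.Ioi (0:ℝ)) q) := by
  have hroot : IsRootFunction ρ := hρ
  refine ⟨fun q hq hrat => ⟨?_, ?_⟩, fun q hq hirr => ?_⟩
  · rw [nhdsWithin_Ioo_eq_nhdsLT hq]
    exact tendsto_const_nhds.div (hroot.tendsto_nhdsLT hq) (hρ q hq).1.1.ne'
  · obtain ⟨L, hL0, hL, hLρ⟩ := hroot.exists_tendsto_nhdsGT_lt hq hrat
    exact ⟨1 / L, tendsto_const_nhds.div hL hL0.ne', one_div_lt_one_div_of_lt hL0 hLρ⟩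
  · exact (continuousAt_const.div (hroot.continuousAt_of_irrational hq hirr)
      (hρ q hq).1.1.ne').continuousWithinAt
end
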